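/- Let T be an optimal irreducible 2WCST whose root is a less-than test ⟨< r⟩, whose ≥-branch subtree T₂ is rooted at a test node on a key i with =/≥-branch subtree T₃ and ≠/<-branch subtree T₄. If w(T₃) < (1/3)·w(T₂), then T₄ cannot have exactly two leaves. -/

import Mathlib

/-- Binary search trees with two-way comparisons (2WCST):
leaves are labelled by keys, internal nodes are equal-to tests `eqNode k yes no`
or less-than tests `ltNode k yes no` (yes-branch taken when `q = k`, resp. `q < k`). -/
inductive CTree where
  | leaf : ℕ → CTree
  | eqNode : ℕ → CTree → CTree → CTree
  | ltNode : ℕ → CTree → CTree → CTree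
deriving DecidableEq

namespace CTree

/-- The key labelling the leaf reached by query `q`. -/
def search : CTree → ℕ → ℕ
  | leaf k, _ => k
  | eqNode k y nb, q => if q = k then y.search q else nb.search q
  | ltNode k y nb, q => if q < k then y.search q else nb.search q

/-- The depth of the leaf reached by query `q`. -/
def searchDepth : CTree → ℕ → ℕ
  | leaf _, _ => 0
  | eqNode k y nb, q => (if q = k then y.searchDepth q else nb.searchDepth q) + 1
  | ltNode k y nb, q => (if q < k then y.searchDepth q else nb.searchDepth q) + 1

/-- All keys appearing in the tree (leaf labels and test keys). -/
def keys : CTree → Finset ℕ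
  | leaf k => {k}
  | eqNode k y nb => insert k (y.keys ∪ nb.keys)
  | ltNode k y nb => insert k (y.keys ∪ nb.keys)

/-- `T` is a valid 2WCST for the instance with key set `K = {1, …, n}`:
all keys used belong to `K` and every query `q ∈ K` reaches a leaf labelled `q`. -/
def ValidFor (n : ℕ) (T : CTree) : Prop :=
  T.keys ⊆ Finset.Icc 1 n ∧ ∀ q ∈ Finset.Icc 1 n, T.search q = q

/-- The cost of `T`: `∑_{k ∈ K} w_k · depth_T(k)`. -/
noncomputable def cost (w : ℕ → ℝ) (n : ℕ) (T : CTree) : ℝ :=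
  ∑ k ∈ Finset.Icc 1 n, w k * T.searchDepth k

/-- `T` is an optimal 2WCST for the instance. -/
noncomputable def OptimalFor (w : ℕ → ℝ) (n : ℕ) (T : CTree) : Prop :=
  ValidFor n T ∧ ∀ T' : CTree, ValidFor n T' → cost w n T ≤ cost w n T'

/-- `w(S)`: total weight of the keys labelling the leaves of a subtree. -/
noncomputable def wt (w : ℕ → ℝ) : CTree → ℝ
  | leaf k => w k
  | eqNode _ y nb => wt w y + wt w nb
  | ltNode _ y nb => wt w y + wt w nb

/-- The side-weight of a node. -/
noncomputable def sw (w : ℕ → ℝ) : CTree → ℝ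
  | leaf _ => 0
  | eqNode k _ _ => w k
  | ltNode _ y nb => min (wt w y) (wt w nb)

/-- `Occurs s T`: `s` occurs as a subtree (node) of `T`. -/
inductive Occurs : CTree → CTree → Prop
  | refl (t : CTree) : Occurs t t
  | eqYes {s k y nb} : Occurs s y → Occurs s (eqNode k y nb)
  | eqNo {s k y nb} : Occurs s nb → Occurs s (eqNode k y nb)
  | ltYes {s k y nb} : Occurs s y → Occurs s (ltNode k y nb)
  | ltNo {s k y nb} : Occurs s nb → Occurs s (ltNode k y nb)

/-- `v` is a child of node `u`. -/
def IsChildOf (v u : CTree) : Prop :=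
  match u with
  | leaf _ => False
  | eqNode _ y nb => v = y ∨ v = nb
  | ltNode _ y nb => v = y ∨ v = nb

/-- The root of the tree is an equal-to test. -/
def RootEq : CTree → Prop
  | eqNode _ _ _ => True
  | _ => False

/-- `ReplaceAt s t T T'`: `T'` is obtained from `T` by replacing one
occurrence of the subtree `s` by `t`, leaving the rest of `T` unchanged. -/
inductive ReplaceAt (s t : CTree) : CTree → CTree → Prop
  | here : ReplaceAt s t s t
  | eqYes {k y y' nb} : ReplaceAt s t y y' → ReplaceAt s t (eqNode k y nb) (eqNode k y' nb)
  | eqNo {k y nb nb'} : ReplaceAt s t nb nb' → ReplaceAt s t (eqNode k y nb) (eqNode k y nb')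
  | ltYes {k y y' nb} : ReplaceAt s t y y' → ReplaceAt s t (ltNode k y nb) (ltNode k y' nb)
  | ltNo {k y nb nb'} : ReplaceAt s t nb nb' → ReplaceAt s t (ltNode k y nb) (ltNode k y nb')

/-- Irreducibility relative to the set `Q` of queries that reach the current subtree:
every branch of every node is traversed by some query. -/
def IrredFrom : Finset ℕ → CTree → Prop
  | _, leaf _ => True
  | Q, eqNode k y nb =>
      (Q.filter (· = k)).Nonempty ∧ (Q.filter (· ≠ k)).Nonempty ∧
      IrredFrom (Q.filter (· = k)) y ∧ IrredFrom (Q.filter (· ≠ k)) nb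
  | Q, ltNode k y nb =>
      (Q.filter (· < k)).Nonempty ∧ (Q.filter (fun q => ¬ q < k)).Nonempty ∧
      IrredFrom (Q.filter (· < k)) y ∧ IrredFrom (Q.filter (fun q => ¬ q < k)) nb

/-- `T` is irreducible: no branch is redundant for the query set `{1, …, n}`. -/
def Irred (n : ℕ) (T : CTree) : Prop := IrredFrom (Finset.Icc 1 n) T

/-- The two kinds of comparison tests. -/
inductive TestKind where
  | eq : TestKind
  | lt : TestKind
deriving DecidableEq

/-- A test node `⟨? k⟩` on key `k` with `=/≥`-branch `hi` and `≠/<`-branch `lo`. -/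
def mkTest : TestKind → ℕ → CTree → CTree → CTree
  | .eq, k, hi, lo => eqNode k hi lo
  | .lt, k, hi, lo => ltNode k lo hi

/-- The `=/≥`-outcome of a test of kind `t` on key `b`, applied to query `q`. -/
def hiOutcome : TestKind → ℕ → ℕ → Prop
  | .eq, b, q => q = b
  | .lt, b, q => b ≤ q

instance (t : TestKind) (b q : ℕ) : Decidable (hiOutcome t b q) :=
  match t with
  | .eq => inferInstanceAs (Decidable (q = b))
  | .lt => inferInstanceAs (Decidable (b ≤ q))

/-- Number of leaves of a tree. -/
def numLeaves : CTree → ℕ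
  | leaf _ => 1
  | eqNode _ y nb => y.numLeaves + nb.numLeaves
  | ltNode _ y nb => y.numLeaves + nb.numLeaves

end CTree

/-!
Let `T₄ = ⟨? c⟩(x, y)`. By irreducibility both leaves are reached, so `x` and `y` are keys
that pass the root test and fail the test on `i`. Replacing `T₂ = ⟨? i⟩(T₃, T₄)` by
`⟨= x⟩(x, ⟨? i⟩(T₃, y))` lifts `x` by one level, keeps `y` where it is and lowers every key
of `T₃` by one level, so optimality gives `w x ≤ w(T₃)`; symmetrically `w y ≤ w(T₃)`.
Hence `w(T₂) = w(T₃) + w x + w y ≤ 3 w(T₃)`.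
-/

namespace CTree

@[simp]
theorem search_mkTest (t : TestKind) (k : ℕ) (hi lo : CTree) (q : ℕ) :
    (mkTest t k hi lo).search q = if hiOutcome t k q then hi.search q else lo.search q := by
  cases t
  · rfl
  · simp only [mkTest, search, hiOutcome]
    by_cases h : q < k
    · simp [h, not_le.2 h]
    · simp [h, le_of_not_gt h]

@[simp]
theorem searchDepth_mkTest (t : TestKind) (k : ℕ) (hi lo : CTree) (q : ℕ) :
    (mkTest t k hi lo).searchDepth q
      = (if hiOutcome t k q then hi.searchDepth q else lo.searchDepth q) + 1 := by
  cases t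
  · rfl
  · simp only [mkTest, searchDepth, hiOutcome]
    by_cases h : q < k
    · simp [h, not_le.2 h]
    · simp [h, le_of_not_gt h]

@[simp]
theorem keys_mkTest (t : TestKind) (k : ℕ) (hi lo : CTree) :
    (mkTest t k hi lo).keys = insert k (hi.keys ∪ lo.keys) := by
  cases t <;> simp [mkTest, keys, Finset.union_comm]

@[simp]
theorem wt_mkTest (w : ℕ → ℝ) (t : TestKind) (k : ℕ) (hi lo : CTree) :
    wt w (mkTest t k hi lo) = wt w hi + wt w lo := by
  cases t <;> simp [mkTest, wt, add_comm]

theorem one_le_numLeaves (T : CTree) : 1 ≤ T.numLeaves := by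
  induction T <;> simp only [numLeaves] <;> omega

theorem exists_eq_leaf_of_numLeaves_eq_one : ∀ {T : CTree}, T.numLeaves = 1 → ∃ k, T = leaf k
  | leaf k, _ => ⟨k, rfl⟩
  | eqNode _ y nb, h | ltNode _ y nb, h => by
    have := one_le_numLeaves y
    have := one_le_numLeaves nb
    simp only [numLeaves] at h
    omega

theorem exists_eq_leaf_of_numLeaves_add_eq_two {u v : CTree}
    (h : u.numLeaves + v.numLeaves = 2) : (∃ a, u = leaf a) ∧ ∃ b, v = leaf b := by
  have := one_le_numLeaves u
  have := one_le_numLeaves v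
  exact ⟨exists_eq_leaf_of_numLeaves_eq_one (by omega),
    exists_eq_leaf_of_numLeaves_eq_one (by omega)⟩

theorem exists_eq_mkTest_leaf_leaf_of_numLeaves_eq_two :
    ∀ {T : CTree}, T.numLeaves = 2 → ∃ t c x y, T = mkTest t c (leaf x) (leaf y)
  | leaf _, h => by simp [numLeaves] at h
  | eqNode c _ _, h => by
    obtain ⟨⟨a, rfl⟩, b, rfl⟩ := exists_eq_leaf_of_numLeaves_add_eq_two h
    exact ⟨.eq, c, a, b, rfl⟩
  | ltNode c _ _, h => by
    obtain ⟨⟨a, rfl⟩, b, rfl⟩ := exists_eq_leaf_of_numLeaves_add_eq_two h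
    exact ⟨.lt, c, b, a, rfl⟩

section TwoLeaves

variable (t : TestKind) (c x y : ℕ)

theorem search_mkTest_leaf_leaf (q : ℕ) :
    (mkTest t c (leaf x) (leaf y)).search q = x ∨ (mkTest t c (leaf x) (leaf y)).search q = y := by
  rw [search_mkTest]
  split_ifs
  · exact .inl rfl
  · exact .inr rfl

theorem searchDepth_mkTest_leaf_leaf (q : ℕ) :
    (mkTest t c (leaf x) (leaf y)).searchDepth q = 1 := by
  simp [searchDepth]

theorem occurs_hi_mkTest_leaf_leaf : Occurs (leaf x) (mkTest t c (leaf x) (leaf y)) := by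
  cases t
  · exact .eqYes (.refl _)
  · exact .ltNo (.refl _)

theorem occurs_lo_mkTest_leaf_leaf : Occurs (leaf y) (mkTest t c (leaf x) (leaf y)) := by
  cases t
  · exact .eqNo (.refl _)
  · exact .ltYes (.refl _)

end TwoLeaves

theorem sum_le_wt (w : ℕ → ℝ) :
    ∀ (T : CTree) (S : Finset ℕ), (∀ k ∈ T.keys, 0 ≤ w k) → (∀ q ∈ S, T.search q = q) →
      ∑ q ∈ S, w q ≤ wt w T
  | leaf k, S, hnn, hS => by
    rcases Finset.subset_singleton_iff.1 fun q hq => Finset.mem_singleton.2 (hS q hq).symm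
      with rfl | rfl
    · simpa [wt] using hnn k (by simp [keys])
    · simp [wt]
  | eqNode k y nb, S, hnn, hS => by
    rw [← Finset.sum_filter_add_sum_filter_not S (· = k)]
    refine add_le_add (sum_le_wt w y _ (fun j hj => hnn j (by simp [keys, hj])) fun q hq => ?_)
      (sum_le_wt w nb _ (fun j hj => hnn j (by simp [keys, hj])) fun q hq => ?_) <;>
    · rw [Finset.mem_filter] at hq
      simpa [search, hq.2] using hS q hq.1
  | ltNode k y nb, S, hnn, hS => by
    rw [← Finset.sum_filter_add_sum_filter_not S (· < k)]
    refine add_le_add (sum_le_wt w y _ (fun j hj => hnn j (by simp [keys, hj])) fun q hq => ?_)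
      (sum_le_wt w nb _ (fun j hj => hnn j (by simp [keys, hj])) fun q hq => ?_) <;>
    · rw [Finset.mem_filter] at hq
      simpa [search, hq.2] using hS q hq.1

theorem IrredFrom.exists_search_eq_of_occurs {k : ℕ} :
    ∀ {Q : Finset ℕ} {T : CTree}, Q.Nonempty → IrredFrom Q T → Occurs (leaf k) T →
      ∃ q ∈ Q, T.search q = k
  | _, leaf _, ⟨q, hq⟩, _, .refl _ => ⟨q, hq, rfl⟩
  | _, eqNode _ y _, _, ⟨hne, _, h, _⟩, .eqYes hk
  | _, eqNode _ _ y, _, ⟨_, hne, _, h⟩, .eqNo hk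
  | _, ltNode _ y _, _, ⟨hne, _, h, _⟩, .ltYes hk
  | _, ltNode _ _ y, _, ⟨_, hne, _, h⟩, .ltNo hk => by
    obtain ⟨q, hq, hqk⟩ := exists_search_eq_of_occurs hne h hk
    rw [Finset.mem_filter] at hq
    exact ⟨q, hq.1, by simpa [search, hq.2] using hqk⟩

theorem Irred.mem_of_occurs_leaf {n r i k : ℕ} {t : TestKind} {L T3 T4 : CTree}
    (hval : ValidFor n (ltNode r L (mkTest t i T3 T4)))
    (hirr : Irred n (ltNode r L (mkTest t i T3 T4))) (hk : Occurs (leaf k) T4) :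
    k ∈ Finset.Icc 1 n ∧ ¬ k < r ∧ ¬ hiOutcome t i k := by
  obtain ⟨q, hq, hqr, hqi, hqk⟩ :
      ∃ q ∈ Finset.Icc 1 n, ¬ q < r ∧ ¬ hiOutcome t i q ∧ T4.search q = k := by
    obtain ⟨-, -, -, h⟩ := hirr
    cases t with
    | eq =>
      obtain ⟨-, hne, -, h4⟩ := h
      obtain ⟨q, hq, hqk⟩ := h4.exists_search_eq_of_occurs hne hk
      simp only [Finset.mem_filter] at hq
      exact ⟨q, hq.1.1, hq.1.2, hq.2, hqk⟩
    | lt =>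
      obtain ⟨hne, -, h4, -⟩ := h
      obtain ⟨q, hq, hqk⟩ := h4.exists_search_eq_of_occurs hne hk
      simp only [Finset.mem_filter] at hq
      exact ⟨q, hq.1.1, hq.1.2, not_le.2 hq.2, hqk⟩
  have hqq : T4.search q = q := by simpa [search, hqr, hqi] using hval.2 q hq
  obtain rfl : q = k := hqq.symm.trans hqk
  exact ⟨hq, hqr, hqi⟩

noncomputable def costOn (w : ℕ → ℝ) (Q : Finset ℕ) (S : CTree) : ℝ :=
  ∑ q ∈ Q, w q * S.searchDepth q

theorem cost_ltNode_sub_cost_ltNode (w : ℕ → ℝ) (n r : ℕ) (L S S' : CTree) :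
    cost w n (ltNode r L S') - cost w n (ltNode r L S)
      = costOn w ((Finset.Icc 1 n).filter (¬ · < r)) S'
        - costOn w ((Finset.Icc 1 n).filter (¬ · < r)) S := by
  simp only [cost, costOn, ← Finset.sum_sub_distrib, Finset.sum_filter]
  refine Finset.sum_congr rfl fun q _ => ?_
  by_cases h : q < r
  · simp [searchDepth, h]
  · simp only [searchDepth, h, if_false, not_false_eq_true, if_true, Nat.cast_add, Nat.cast_one]
    ring

/-- Subtrees of optimal trees are optimal for the queries reaching them. -/
theorem OptimalFor.costOn_le {w : ℕ → ℝ} {n r : ℕ} {L S S' : CTree}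
    (hopt : OptimalFor w n (ltNode r L S)) (hkeys : S'.keys ⊆ Finset.Icc 1 n)
    (hsearch : ∀ q ∈ Finset.Icc 1 n, ¬ q < r → S'.search q = q) :
    costOn w ((Finset.Icc 1 n).filter (¬ · < r)) S
      ≤ costOn w ((Finset.Icc 1 n).filter (¬ · < r)) S' := by
  obtain ⟨⟨hkeysT, hsearchT⟩, hmin⟩ := hopt
  have hval : ValidFor n (ltNode r L S') := by
    refine ⟨?_, fun q hq => ?_⟩
    · simp only [keys, Finset.insert_subset_iff, Finset.union_subset_iff] at hkeysT ⊢
      exact ⟨hkeysT.1, hkeysT.2.1, hkeys⟩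
    · by_cases h : q < r
      · simpa [search, h] using hsearchT q hq
      · simpa [search, h] using hsearch q hq h
  linarith [cost_ltNode_sub_cost_ltNode w n r L S S', hmin _ hval]

section Exchange

variable {t : TestKind} {i x y : ℕ} {T3 T4 : CTree}

theorem search_exchange (hT4 : ∀ q, T4.search q = x ∨ T4.search q = y) {q : ℕ}
    (hq : (mkTest t i T3 T4).search q = q) :
    (eqNode x (leaf x) (mkTest t i T3 (leaf y))).search q = q := by
  by_cases hqx : q = x
  · simp [search, hqx]
  simp only [search, if_neg hqx, search_mkTest] at hq ⊢
  split_ifs at hq ⊢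
  · exact hq
  · rcases hT4 q with h | h
    · exact absurd (h ▸ hq).symm hqx
    · exact h ▸ hq

/-- All queries other than `x` and those sent to `T₃` stay at depth `2`. -/
theorem searchDepth_exchange (hx : ¬ hiOutcome t i x) (hT4 : ∀ q, T4.searchDepth q = 1)
    (q : ℕ) :
    (eqNode x (leaf x) (mkTest t i T3 (leaf y))).searchDepth q + (if q = x then 1 else 0)
      = (mkTest t i T3 T4).searchDepth q + (if hiOutcome t i q then 1 else 0) := by
  by_cases hqx : q = x
  · subst hqx
    simp [searchDepth, hx, hT4]
  · by_cases hqi : hiOutcome t i q <;> simp [searchDepth, hqx, hqi, hT4]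

theorem costOn_exchange (w : ℕ → ℝ) {Q : Finset ℕ} (hxQ : x ∈ Q) (hx : ¬ hiOutcome t i x)
    (hT4 : ∀ q, T4.searchDepth q = 1) :
    costOn w Q (eqNode x (leaf x) (mkTest t i T3 (leaf y))) + w x
      = costOn w Q (mkTest t i T3 T4) + ∑ q ∈ Q.filter (hiOutcome t i), w q := by
  have := Finset.sum_congr rfl fun q (_ : q ∈ Q) =>
    congrArg (fun d : ℕ => w q * d) (searchDepth_exchange (T3 := T3) (y := y) hx hT4 q)
  simp only [Nat.cast_add, mul_add, Finset.sum_add_distrib, Nat.cast_ite, Nat.cast_one,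
    Nat.cast_zero, mul_ite, mul_one, mul_zero, Finset.sum_ite_eq', if_pos hxQ,
    ← Finset.sum_filter] at this
  simpa only [costOn] using this

end Exchange

theorem OptimalFor.le_wt_of_exchange {w : ℕ → ℝ} {n r i x y : ℕ} {t : TestKind}
    {L T3 T4 : CTree} (hopt : OptimalFor w n (ltNode r L (mkTest t i T3 T4)))
    (hw : ∀ q ∈ Finset.Icc 1 n, 0 ≤ w q)
    (hT4s : ∀ q, T4.search q = x ∨ T4.search q = y) (hT4d : ∀ q, T4.searchDepth q = 1)
    (hx : x ∈ Finset.Icc 1 n) (hxr : ¬ x < r) (hxi : ¬ hiOutcome t i x)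
    (hy : y ∈ Finset.Icc 1 n) :
    w x ≤ wt w T3 := by
  obtain ⟨hkeys, hsearch⟩ := hopt.1
  have hkeysS : (mkTest t i T3 T4).keys ⊆ Finset.Icc 1 n :=
    fun k hk => hkeys (Finset.mem_insert_of_mem (Finset.mem_union_right _ hk))
  have hsearchS : ∀ q ∈ Finset.Icc 1 n, ¬ q < r → (mkTest t i T3 T4).search q = q :=
    fun q hq hqr => by simpa [search, hqr] using hsearch q hq
  have hle := hopt.costOn_le (S' := eqNode x (leaf x) (mkTest t i T3 (leaf y)))
    (by
      simp only [keys, keys_mkTest, Finset.insert_subset_iff, Finset.union_subset_iff,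
        Finset.singleton_subset_iff] at hkeysS ⊢
      exact ⟨hx, hx, hkeysS.1, hkeysS.2.1, hy⟩)
    (fun q hq hqr => search_exchange hT4s (hsearchS q hq hqr))
  have hexch := costOn_exchange w (T3 := T3) (y := y)
    (Q := (Finset.Icc 1 n).filter (¬ · < r)) (Finset.mem_filter.2 ⟨hx, hxr⟩) hxi hT4d
  have hT3 : ∑ q ∈ ((Finset.Icc 1 n).filter (¬ · < r)).filter (hiOutcome t i), w q
      ≤ wt w T3 := by
    refine sum_le_wt w T3 _ (fun k hk => hw k (hkeysS (by simp [hk]))) fun q hq => ?_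
    simp only [Finset.mem_filter] at hq
    simpa [hq.2] using hsearchS q hq.1.1 hq.1.2
  linarith

end CTree

open CTree in
/-- In an optimal irreducible 2WCST with root `⟨< r⟩` whose ≥-branch is
`T₂ = ⟨? i⟩(T₃, T₄)`, if `w(T₃) < (1/3)·w(T₂)` then `T₄` cannot have exactly
two leaves. -/
theorem T4_not_two_leaves
    (n : ℕ) (w : ℕ → ℝ) (hw : ∀ q ∈ Finset.Icc 1 n, 0 ≤ w q)
    (r i : ℕ) (t : TestKind) (L T3 T4 : CTree)
    (hopt : OptimalFor w n (CTree.ltNode r L (mkTest t i T3 T4)))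
    (hirr : Irred n (CTree.ltNode r L (mkTest t i T3 T4)))
    (hT3 : wt w T3 < (1 / 3 : ℝ) * wt w (mkTest t i T3 T4)) :
    numLeaves T4 ≠ 2 := by
  intro h2
  obtain ⟨t', c, x, y, rfl⟩ := exists_eq_mkTest_leaf_leaf_of_numLeaves_eq_two h2
  have hsearch := search_mkTest_leaf_leaf t' c x y
  have hdepth := searchDepth_mkTest_leaf_leaf t' c x y
  obtain ⟨hx, hxr, hxi⟩ := hirr.mem_of_occurs_leaf hopt.1 (occurs_hi_mkTest_leaf_leaf t' c x y)
  obtain ⟨hy, hyr, hyi⟩ := hirr.mem_of_occurs_leaf hopt.1 (occurs_lo_mkTest_leaf_leaf t' c x y)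
  have hwx := hopt.le_wt_of_exchange hw hsearch hdepth hx hxr hxi hy
  have hwy := hopt.le_wt_of_exchange hw (fun q => (hsearch q).symm) hdepth hy hyr hyi hx
  simp only [wt_mkTest, wt] at hT3
  linarith
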